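/- arXiv:2110.04797 — 7 statements merged into one kernel-verified Lean document; each statement's English description precedes it below -/
import Mathlib

section
/- Let $G$ be a compact $p$-adic Lie group with closed subgroup $P$, and let $V$ be a $K$-Banach space with a continuous $P$-action, for $K$ a finite extension of $\mathbb{Q}_p$. Then the continuous induction $\operatorname{ct-Ind}^G_P(V)$ is a $K$-Banach space with continuous $G$-action, and if $V$ is an admissible Banach representation of $P$ then $\operatorname{ct-Ind}^G_P(V)$ is an admissible Banach representation of $G$. -/
/-!
STATEMENT 3: Let `G` be a compact `p`-adic Lie group with closed subgroup `P`, and let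
`V` be a `K`-Banach space with a continuous `P`-action (`K` a finite extension of
`ℚ_p`).  Then `ct-Ind^G_P V` is a `K`-Banach space with continuous `G`-action (it is a
closed subspace of the Banach space `C(G, V)`, and the left-translation `G`-action on
it is continuous), and if `V` is an admissible Banach representation of `P` then
`ct-Ind^G_P V` is an admissible Banach representation of `G`.

Admissibility of a Banach representation of a compact group `H` is formalized via the
equivalent characterization: there is an `H`-equivariant closed embedding
`V ↪ C(H, K)ⁿ` for some `n` (with `H` acting by right translation on `C(H,K)`).
-/

set_option maxHeartbeats 1000000

open scoped Topology

variable (p : ℕ) [Fact p.Prime]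
variable (K : Type) [NontriviallyNormedField K] [NormedAlgebra ℚ_[p] K]
  [FiniteDimensional ℚ_[p] K]
variable (G : Type) [Group G] [TopologicalSpace G] [IsTopologicalGroup G] [CompactSpace G]
variable (P : Subgroup G) [CompactSpace ↥P]
variable (V : Type) [NormedAddCommGroup V] [NormedSpace K V] [CompleteSpace V]

/-- The continuous induction `ct-Ind^G_P V = {f : G → V continuous | f (g q) = q⁻¹ • f g}`,
as a `K`-submodule of `C(G, V)`. -/
def ctIndBanach (ρ : ↥P →* (V ≃L[K] V)) : Submodule K C(G, V) where
  carrier := {f | ∀ (q : ↥P) (g : G), f (g * (q : G)) = ρ q⁻¹ (f g)}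
  add_mem' := by intro a b ha hb q g; simp [ha q g, hb q g, map_add]
  zero_mem' := by intro q g; simp
  smul_mem' := by intro c a ha q g; simp [ha q g, map_smul]

/-- The left-translation action of `G` on `ct-Ind^G_P V`: `(h · f)(x) = f (h⁻¹ x)`. -/
noncomputable def indAct (ρ : ↥P →* (V ≃L[K] V)) (h : G) (f : ↥(ctIndBanach K G P V ρ)) :
    ↥(ctIndBanach K G P V ρ) :=
  ⟨(f : C(G, V)).comp ⟨fun x => h⁻¹ * x, by continuity⟩, by
    intro q g
    have := f.2 q (h⁻¹ * g)
    simpa [mul_assoc] using this⟩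

/-- A Banach representation `σ` of a compact group `H` on `W` is *admissible* if there
is an `H`-equivariant closed embedding `W ↪ C(H, K)ⁿ` for some `n`, where `H` acts on
`C(H, K)` by right translation. -/
def IsAdmissibleBanachRep (H : Type) [Group H] [TopologicalSpace H] [IsTopologicalGroup H]
    [CompactSpace H] (W : Type) [NormedAddCommGroup W] [NormedSpace K W]
    (σ : H → W → W) : Prop :=
  ∃ (n : ℕ) (T : W →L[K] (Fin n → C(H, K))),
    Topology.IsClosedEmbedding T ∧
    ∀ (h : H) (w : W) (j : Fin n) (x : H), T (σ h w) j x = T w j (x * h)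

theorem statement3
    (hPclosed : IsClosed (P : Set G))
    (ρ : ↥P →* (V ≃L[K] V))
    (hρcont : Continuous fun q : ↥P × V => ρ q.1 q.2) :
    -- (1) `ct-Ind^G_P V` is a closed subspace of the Banach space `C(G, V)`, hence a
    --     `K`-Banach space;
    IsClosed ((ctIndBanach K G P V ρ : Submodule K C(G, V)) : Set C(G, V)) ∧
    -- (2) the (left-translation) `G`-action on it is continuous;
    (Continuous fun q : G × ↥(ctIndBanach K G P V ρ) => indAct K G P V ρ q.1 q.2) ∧
    -- (3) if `V` is an admissible Banach representation of `P`, then `ct-Ind^G_P V`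
    --     is an admissible Banach representation of `G`.
    (IsAdmissibleBanachRep K ↥P V (fun q v => ρ q v) →
      IsAdmissibleBanachRep K G ↥(ctIndBanach K G P V ρ) (indAct K G P V ρ)) := by
  classical
  -- Part (1): closedness
  have hclosed : IsClosed ((ctIndBanach K G P V ρ : Submodule K C(G, V)) : Set C(G, V)) := by
    have hset : ((ctIndBanach K G P V ρ : Submodule K C(G, V)) : Set C(G, V)) =
        ⋂ (q : ↥P) (g : G), {f : C(G, V) | f (g * (q : G)) = ρ q⁻¹ (f g)} := by
      ext f
      simp only [Set.mem_iInter, Set.mem_setOf_eq, SetLike.mem_coe]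
      exact ⟨fun h q g => h q g, fun h q g => h q g⟩
    rw [hset]
    refine isClosed_iInter fun q => isClosed_iInter fun g => isClosed_eq ?_ ?_
    · exact continuous_eval_const (g * (q : G))
    · exact (ρ q⁻¹).continuous.comp (continuous_eval_const g)
  refine ⟨hclosed, ?_, ?_⟩
  -- Part (2): continuity of the G-action
  · rw [continuous_induced_rng]
    have h1 : Continuous fun h : G => ((⟨fun x => h⁻¹ * x, by continuity⟩ : C(G, G))) := by
      have heq : (fun h : G => ((⟨fun x => h⁻¹ * x, by continuity⟩ : C(G, G)))) =
          fun h : G => (ContinuousMap.curry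
            (⟨fun x : G × G => x.1⁻¹ * x.2, by continuity⟩ : C(G × G, G))) h := by
        funext h
        ext x
        rfl
      rw [heq]
      exact (ContinuousMap.curry _).continuous
    have h2 : Continuous fun q : G × ↥(ctIndBanach K G P V ρ) => (q.2 : C(G, V)) :=
      continuous_subtype_val.comp continuous_snd
    exact ContinuousMap.continuous_comp'.comp ((h1.comp continuous_fst).prodMk h2)
  -- Part (3): admissibility
  · rintro ⟨n, T, hTemb, hTeq⟩
    haveI : CompleteSpace ↥(ctIndBanach K G P V ρ) := hclosed.completeSpace_coe
    set R : Submodule K (Fin n → C(↥P, K)) := LinearMap.range (T : V →ₗ[K] (Fin n → C(↥P, K))) with hR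
    -- the inverse of T on its range, and the resulting lower bound for T
    have hemb : Topology.IsEmbedding ⇑T := hTemb.isEmbedding
    set hhom : V ≃ₜ Set.range ⇑T := hemb.toHomeomorph with hhomdef
    have hmem : ∀ r : ↥R, (r : Fin n → C(↥P, K)) ∈ Set.range ⇑T := by
      intro r
      show (r : Fin n → C(↥P, K)) ∈ Set.range ((T : V →ₗ[K] (Fin n → C(↥P, K))) : V → _)
      rw [← LinearMap.coe_range (T : V →ₗ[K] (Fin n → C(↥P, K)))]
      exact r.2
    set g : ↥R → V := fun r => hhom.symm ⟨(r : Fin n → C(↥P, K)), hmem r⟩ with hg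
    have hTg : ∀ r : ↥R, T (g r) = (r : Fin n → C(↥P, K)) := by
      intro r
      have happ : hhom (g r) = ⟨(r : Fin n → C(↥P, K)), hmem r⟩ := hhom.apply_symm_apply _
      calc T (g r) = ((hhom (g r) : Set.range ⇑T) : Fin n → C(↥P, K)) := rfl
        _ = (r : Fin n → C(↥P, K)) := by rw [happ]
    have hgcont : Continuous g :=
      hhom.symm.continuous.comp (Continuous.subtype_mk continuous_subtype_val _)
    set glm : ↥R →ₗ[K] V :=
      { toFun := g
        map_add' := by
          intro r s
          apply hTemb.injective
          show T (g (r + s)) = T (g r + g s)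
          rw [map_add, hTg, hTg, hTg, Submodule.coe_add]
        map_smul' := by
          intro a r
          apply hTemb.injective
          show T (g (a • r)) = T (a • g r)
          rw [map_smul, hTg, hTg, SetLike.val_smul] } with hglm
    obtain ⟨c₀, hc₀pos, hc₀⟩ := SemilinearMapClass.bound_of_continuous glm hgcont
    have hcle : ∀ v : V, ‖v‖ ≤ c₀ * ‖T v‖ := by
      intro v
      have hmemv : T v ∈ R := LinearMap.mem_range.mpr ⟨v, rfl⟩
      set rv : ↥R := ⟨T v, hmemv⟩ with hrv
      have h1 : g rv = v := by
        apply hTemb.injective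
        rw [hTg]
      have h2 : ‖glm rv‖ ≤ c₀ * ‖rv‖ := hc₀ rv
      have h3 : glm rv = g rv := rfl
      have h4 : ‖rv‖ = ‖T v‖ := rfl
      rw [h3, h1, h4] at h2
      exact h2
    set c : NNReal := c₀.toNNReal with hcdef
    have hcc : (c : ℝ) = c₀ := Real.coe_toNNReal _ hc₀pos.le
    -- the embedding S : ct-Ind → C(G,K)^n, (S f) j x = T (f x⁻¹) j 1
    set Sfun : ↥(ctIndBanach K G P V ρ) → Fin n → C(G, K) := fun f j =>
      ⟨fun x => T ((f : C(G, V)) x⁻¹) j 1, by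
        refine (continuous_eval_const (1 : ↥P)).comp ?_
        refine (continuous_apply j).comp ?_
        exact T.continuous.comp ((map_continuous (f : C(G, V))).comp continuous_inv)⟩
      with hSfun
    have hSapp : ∀ (f : ↥(ctIndBanach K G P V ρ)) (j : Fin n) (x : G),
        Sfun f j x = T ((f : C(G, V)) x⁻¹) j 1 := fun f j x => rfl
    set S₀ : ↥(ctIndBanach K G P V ρ) →ₗ[K] (Fin n → C(G, K)) :=
      { toFun := Sfun
        map_add' := by
          intro f g
          funext j
          ext x
          simp [hSapp]
        map_smul' := by
          intro a f
          funext j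
          ext x
          simp [hSapp] } with hS₀
    have hSbound : ∀ f, ‖S₀ f‖ ≤ ‖T‖ * ‖f‖ := by
      intro f
      have hnn : (0:ℝ) ≤ ‖T‖ * ‖f‖ := mul_nonneg (norm_nonneg _) (norm_nonneg _)
      rw [pi_norm_le_iff_of_nonneg hnn]
      intro j
      rw [ContinuousMap.norm_le _ hnn]
      intro x
      calc ‖T ((f : C(G, V)) x⁻¹) j 1‖ ≤ ‖T ((f : C(G, V)) x⁻¹) j‖ :=
            ContinuousMap.norm_coe_le_norm _ _
        _ ≤ ‖T ((f : C(G, V)) x⁻¹)‖ := norm_le_pi_norm _ j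
        _ ≤ ‖T‖ * ‖(f : C(G, V)) x⁻¹‖ := T.le_opNorm _
        _ ≤ ‖T‖ * ‖f‖ := by
            refine mul_le_mul_of_nonneg_left ?_ (norm_nonneg T)
            exact ContinuousMap.norm_coe_le_norm (f : C(G, V)) x⁻¹
    set S : ↥(ctIndBanach K G P V ρ) →L[K] (Fin n → C(G, K)) :=
      LinearMap.mkContinuous S₀ ‖T‖ hSbound with hS
    have hSapp' : ∀ (f : ↥(ctIndBanach K G P V ρ)) (j : Fin n) (x : G),
        S f j x = T ((f : C(G, V)) x⁻¹) j 1 := fun f j x => rfl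
    -- key identity: T (f x) j q = S f j (q * x⁻¹)
    have hkey : ∀ (f : ↥(ctIndBanach K G P V ρ)) (x : G) (j : Fin n) (q : ↥P),
        T ((f : C(G, V)) x) j q = S f j ((q : G) * x⁻¹) := by
      intro f x j q
      have h1 : (f : C(G, V)) (x * ((q⁻¹ : ↥P) : G)) = ρ q ((f : C(G, V)) x) := by
        have hm := f.2 q⁻¹ x
        simpa using hm
      have h2 := hTeq q ((f : C(G, V)) x) j 1
      calc T ((f : C(G, V)) x) j q = T ((f : C(G, V)) x) j (1 * q) := by rw [one_mul]
        _ = T (ρ q ((f : C(G, V)) x)) j 1 := h2.symm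
        _ = T ((f : C(G, V)) (x * ((q⁻¹ : ↥P) : G))) j 1 := by rw [h1]
        _ = S f j ((q : G) * x⁻¹) := by
            rw [hSapp']
            congr 2
            rw [mul_inv_rev, inv_inv]
            rfl
    -- S is antilipschitz
    have hanti : ∀ f, ‖f‖ ≤ (c : ℝ) * ‖S f‖ := by
      intro f
      have hnn : (0:ℝ) ≤ (c : ℝ) * ‖S f‖ := mul_nonneg c.coe_nonneg (norm_nonneg _)
      have hf : ‖(f : C(G, V))‖ ≤ (c : ℝ) * ‖S f‖ := by
        rw [ContinuousMap.norm_le _ hnn]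
        intro x
        have hTfx : ‖T ((f : C(G, V)) x)‖ ≤ ‖S f‖ := by
          rw [pi_norm_le_iff_of_nonneg (norm_nonneg _)]
          intro j
          rw [ContinuousMap.norm_le _ (norm_nonneg _)]
          intro q
          rw [hkey f x j q]
          calc ‖S f j ((q : G) * x⁻¹)‖ ≤ ‖S f j‖ := ContinuousMap.norm_coe_le_norm _ _
            _ ≤ ‖S f‖ := norm_le_pi_norm _ j
        calc ‖(f : C(G, V)) x‖ ≤ c₀ * ‖T ((f : C(G, V)) x)‖ := hcle _
          _ ≤ (c : ℝ) * ‖S f‖ := by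
              rw [hcc]
              exact mul_le_mul_of_nonneg_left hTfx hc₀pos.le
      exact hf
    refine ⟨n, S, ?_, ?_⟩
    · exact (S.antilipschitz_of_bound hanti).isClosedEmbedding S.uniformContinuous
    · intro h f j x
      rw [hSapp', hSapp']
      have harg : ((indAct K G P V ρ h f : C(G, V))) x⁻¹ = (f : C(G, V)) ((x * h)⁻¹) := by
        show (f : C(G, V)) (h⁻¹ * x⁻¹) = (f : C(G, V)) ((x * h)⁻¹)
        rw [mul_inv_rev]
      rw [harg]
end

section
/- Let $0 \to U \to V \to W \to 0$ be a short exact sequence of locally convex topological vector spaces over a nonarchimedean field, where $U$ carries the subspace topology from $V$ and $W$ the quotient topology. Suppose additionally $U$ is closed in $V$. Then the induced sequence of Hausdorff quotients $0 \to U/\overline{\{0\}_U} \to V/\overline{\{0\}_V} \to W/\overline{\{0\}_W} \to 0$ is exact, with $U/\overline{\{0\}_U}$ carrying the subspace topology and $W/\overline{\{0\}_W}$ the quotient topology. -/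
/-!
STATEMENT 6: Let `0 → U → V → W → 0` be a short exact sequence of (locally convex)
topological vector spaces over a nonarchimedean field, where `U` carries the subspace
topology and `W` the quotient topology, and `U` is closed in `V`.  Then the induced
sequence of maximal Hausdorff quotients (separation quotients)
`0 → U/‾{0} → V/‾{0} → W/‾{0} → 0` is exact, the first map being an embedding
(subspace topology) and the second a quotient map (quotient topology).
-/

open SeparationQuotient

/-- The map induced on maximal Hausdorff quotients by a continuous map. -/
noncomputable def sqMap {X Y : Type*} [TopologicalSpace X] [TopologicalSpace Y]
    (f : X → Y) (hf : Continuous f) : SeparationQuotient X → SeparationQuotient Y :=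
  SeparationQuotient.lift (fun x => SeparationQuotient.mk (f x))
    (fun _ _ h => SeparationQuotient.mk_eq_mk.mpr (h.map hf))

theorem statement6 {K U V W : Type*} [NontriviallyNormedField K] [IsUltrametricDist K]
    [AddCommGroup U] [Module K U] [TopologicalSpace U] [IsTopologicalAddGroup U]
    [ContinuousSMul K U]
    [AddCommGroup V] [Module K V] [TopologicalSpace V] [IsTopologicalAddGroup V]
    [ContinuousSMul K V]
    [AddCommGroup W] [Module K W] [TopologicalSpace W] [IsTopologicalAddGroup W]
    [ContinuousSMul K W]
    (f : U →L[K] V) (g : V →L[K] W)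
    (hfinj : Function.Injective f)
    (hgsurj : Function.Surjective g)
    (hexact : ∀ v : V, g v = 0 ↔ v ∈ Set.range f)
    (hfemb : Topology.IsEmbedding f)            -- `U` has the subspace topology
    (hgquot : Topology.IsQuotientMap g)          -- `W` has the quotient topology
    (hclosed : IsClosed (Set.range (f : U → V))) :
    Function.Injective (sqMap f f.continuous) ∧
    Function.Surjective (sqMap g g.continuous) ∧
    (∀ y : SeparationQuotient V,
      sqMap g g.continuous y = SeparationQuotient.mk 0 ↔
        y ∈ Set.range (sqMap f f.continuous)) ∧
    Topology.IsEmbedding (sqMap f f.continuous) ∧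
    Topology.IsQuotientMap (sqMap g g.continuous) := by
  have hcf : Continuous (sqMap f f.continuous) :=
    continuous_lift_iff.mpr (continuous_mk.comp f.continuous)
  have hcg : Continuous (sqMap g g.continuous) :=
    continuous_lift_iff.mpr (continuous_mk.comp g.continuous)
  -- g is an open map
  have hgopen : IsOpenMap g := by
    intro S hS
    rw [← hgquot.isOpen_preimage]
    have hpre : g ⁻¹' (g '' S) = ⋃ u : U, (fun v : V => v + f u) ⁻¹' S := by
      ext v
      simp only [Set.mem_preimage, Set.mem_image, Set.mem_iUnion]
      constructor
      · rintro ⟨s, hs, hgs⟩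
        have h0 : g (s - v) = 0 := by rw [map_sub, hgs, sub_self]
        obtain ⟨u, hu⟩ := (hexact _).mp h0
        exact ⟨u, by rwa [hu, add_sub_cancel]⟩
      · rintro ⟨u, hu⟩
        refine ⟨v + f u, hu, ?_⟩
        have h0 : g (f u) = 0 := (hexact _).mpr ⟨u, rfl⟩
        rw [map_add, h0, add_zero]
    rw [hpre]
    exact isOpen_iUnion fun u => hS.preimage (continuous_id.add continuous_const)
  -- kernel fact: if g v is inseparable from 0 then v lies in the range of f
  have hker : ∀ v : V, g v ∈ closure ({0} : Set W) → v ∈ Set.range f := by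
    intro v hv
    have hcl : v ∈ closure (Set.range (f : U → V)) := by
      rw [mem_closure_iff]
      intro o ho hvo
      obtain ⟨w, hw, hw0⟩ := mem_closure_iff.mp hv (g '' o) (hgopen o ho) ⟨v, hvo, rfl⟩
      rcases hw with ⟨x, hxo, hgx⟩
      rcases (hexact x).mp (by rw [hgx]; exact hw0) with ⟨u, hu⟩
      exact ⟨x, hxo, u, hu⟩
    rwa [hclosed.closure_eq] at hcl
  -- injectivity
  have hinj : Function.Injective (sqMap f f.continuous) := by
    intro a b h
    obtain ⟨u, rfl⟩ := surjective_mk a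
    obtain ⟨u', rfl⟩ := surjective_mk b
    simp only [sqMap, lift_mk] at h
    exact mk_eq_mk.mpr (hfemb.toIsInducing.inseparable_iff.mp (mk_eq_mk.mp h))
  -- surjectivity
  have hsurj : Function.Surjective (sqMap g g.continuous) := by
    intro y
    obtain ⟨w, rfl⟩ := surjective_mk y
    obtain ⟨v, rfl⟩ := hgsurj w
    exact ⟨mk v, rfl⟩
  -- exactness
  have hex : ∀ y : SeparationQuotient V,
      sqMap g g.continuous y = SeparationQuotient.mk 0 ↔
        y ∈ Set.range (sqMap f f.continuous) := by
    intro y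
    obtain ⟨v, rfl⟩ := surjective_mk y
    constructor
    · intro h
      have h1 : (mk (g v) : SeparationQuotient W) = mk 0 := h
      have h2 : Inseparable (g v) (0 : W) := mk_eq_mk.mp h1
      have h3 : g v ∈ closure ({0} : Set W) := by
        have := addGroup_inseparable_iff.mp h2
        rw [← Set.singleton_zero] at this
        simpa using this
      obtain ⟨u, rfl⟩ := hker v h3
      exact ⟨mk u, rfl⟩
    · rintro ⟨z, hz⟩
      obtain ⟨u, rfl⟩ := surjective_mk z
      have h0 : g (f u) = 0 := (hexact _).mpr ⟨u, rfl⟩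
      rw [← hz]
      show (mk (g (f u)) : SeparationQuotient W) = mk 0
      rw [h0]
  -- embedding
  have hind : Topology.IsInducing (sqMap f f.continuous) := by
    refine ⟨le_antisymm (continuous_iff_le_induced.mp hcf) ?_⟩
    rw [TopologicalSpace.le_def]
    intro O hO
    rw [isOpen_induced_iff]
    obtain ⟨O', hO', hO'pre⟩ :=
      hfemb.toIsInducing.isOpen_iff.mp ((hO : IsOpen O).preimage continuous_mk)
    refine ⟨mk '' O', isOpenMap_mk O' hO', ?_⟩
    ext a
    obtain ⟨u, rfl⟩ := surjective_mk a
    have : sqMap f f.continuous (mk u) = mk (f u) := rfl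
    rw [Set.mem_preimage, this]
    constructor
    · intro hm
      have : f u ∈ mk ⁻¹' (mk '' O') := hm
      rw [preimage_image_mk_open hO'] at this
      have : u ∈ mk ⁻¹' O := by rw [← hO'pre]; exact this
      exact this
    · intro hm
      have hu : u ∈ f ⁻¹' O' := by rw [hO'pre]; exact hm
      exact ⟨f u, hu, rfl⟩
  -- quotient map
  have hq : Topology.IsQuotientMap (sqMap g g.continuous) := by
    have hcomp : (sqMap g g.continuous) ∘ (mk : V → SeparationQuotient V)
        = (mk : W → SeparationQuotient W) ∘ g := rfl
    have : Topology.IsQuotientMap ((sqMap g g.continuous) ∘ mk) := by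
      rw [hcomp]; exact isQuotientMap_mk.comp hgquot
    exact Topology.IsQuotientMap.of_comp continuous_mk hcg this
  exact ⟨hinj, hsurj, hex, ⟨hind, hinj⟩, hq⟩
end

section
/- Let $0 \to U \to V \to W \to 0$ be a short exact sequence of locally convex vector spaces over a nonarchimedean field such that $U$ has the subspace topology and $W$ the quotient topology. In general (without assuming $U$ closed), the image of $U/\overline{\{0\}_U}$ in $V/\overline{\{0\}_V}$ is dense in the kernel of the surjection $V/\overline{\{0\}_V} \twoheadrightarrow W/\overline{\{0\}_W}$. -/
/-!
STATEMENT 7: Let `0 → U → V → W → 0` be a short exact sequence of (locally convex)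
topological vector spaces over a nonarchimedean field, with `U` having the subspace
topology and `W` the quotient topology.  Without assuming that `U` is closed in `V`,
the image of `U/‾{0}` in the maximal Hausdorff quotient `V/‾{0}` is dense in the
kernel of the induced surjection `V/‾{0} ↠ W/‾{0}`.
-/

open SeparationQuotient

/-- A continuous additive group hom which is a topological quotient map is open. -/
lemma aux_isOpenMap {V W : Type*} [AddCommGroup V] [TopologicalSpace V]
    [IsTopologicalAddGroup V] [AddCommGroup W] [TopologicalSpace W] [IsTopologicalAddGroup W]
    (g : V →+ W) (hgquot : Topology.IsQuotientMap g) : IsOpenMap g := by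
  intro N hN
  rw [hgquot.isOpen_preimage.symm]
  rw [isOpen_iff_mem_nhds]
  rintro v ⟨n, hn, hgn⟩
  have : (fun m => m + (v - n)) '' N ∈ nhds v := by
    have := (Homeomorph.addRight (v - n)).isOpenMap N hN
    exact this.mem_nhds ⟨n, hn, by simp only [Homeomorph.coe_addRight]; abel⟩
  filter_upwards [this]
  rintro x ⟨m, hm, rfl⟩
  exact ⟨m, hm, by simp [map_add, map_sub, hgn]⟩

theorem statement7 {K U V W : Type*} [NontriviallyNormedField K] [IsUltrametricDist K]
    [AddCommGroup U] [Module K U] [TopologicalSpace U] [IsTopologicalAddGroup U]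
    [ContinuousSMul K U]
    [AddCommGroup V] [Module K V] [TopologicalSpace V] [IsTopologicalAddGroup V]
    [ContinuousSMul K V]
    [AddCommGroup W] [Module K W] [TopologicalSpace W] [IsTopologicalAddGroup W]
    [ContinuousSMul K W]
    (f : U →L[K] V) (g : V →L[K] W)
    (hfinj : Function.Injective f)
    (hgsurj : Function.Surjective g)
    (hexact : ∀ v : V, g v = 0 ↔ v ∈ Set.range f)
    (hfemb : Topology.IsEmbedding f)            -- `U` has the subspace topology
    (hgquot : Topology.IsQuotientMap g) :        -- `W` has the quotient topology
    (sqMap g g.continuous) ⁻¹' {SeparationQuotient.mk 0} ⊆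
      closure (Set.range (sqMap f f.continuous)) := by
  intro x hx
  obtain ⟨v, rfl⟩ := surjective_mk x
  have hx' : SeparationQuotient.mk (g v) = SeparationQuotient.mk (0 : W) := hx
  have hins : Inseparable (g v) (0 : W) := mk_eq_mk.mp hx'
  have hcl : g v ∈ closure ({0} : Set W) := by
    have := hins.specializes'
    rwa [specializes_iff_mem_closure] at this
  -- v is in the closure of the range of f
  have hv : v ∈ closure (Set.range f) := by
    rw [mem_closure_iff]
    intro O hO hvO
    have hopen : IsOpen (g '' O) := aux_isOpenMap g.toLinearMap.toAddMonoidHom hgquot O hO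
    have h0 : (0 : W) ∈ g '' O := by
      rcases (mem_closure_iff.mp hcl (g '' O) hopen ⟨v, hvO, rfl⟩) with ⟨w, hw1, hw2⟩
      rwa [Set.mem_singleton_iff.mp hw2] at hw1
    rcases h0 with ⟨n, hnO, hgn⟩
    exact ⟨n, hnO, (hexact n).mp hgn⟩
  -- push through mk
  have hrange : Set.range (sqMap f f.continuous) = SeparationQuotient.mk '' Set.range f := by
    ext y
    constructor
    · rintro ⟨z, rfl⟩
      obtain ⟨u, rfl⟩ := surjective_mk z
      exact ⟨f u, ⟨u, rfl⟩, rfl⟩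
    · rintro ⟨_, ⟨u, rfl⟩, rfl⟩
      exact ⟨SeparationQuotient.mk u, rfl⟩
  rw [hrange]
  exact image_closure_subset_closure_image continuous_mk ⟨v, hv, rfl⟩
end

section
/- Let $0 \to U \to V \to W \to 0$ be a short exact sequence of locally convex vector spaces over a nonarchimedean field with $U$ having the subspace topology and $W$ the quotient topology. Then the induced sequence of Hausdorff completions $0 \to \hat{U} \to \hat{V} \to \hat{W}$ is exact, and the maps are strict (i.e., $\hat{U}$ has the subspace topology in $\hat{V}$ and the image of $\hat{V}$ in $\hat{W}$ carries the quotient topology). -/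
/-!
STATEMENT 8: Let `0 → U → V → W → 0` be a short exact sequence of (locally convex)
topological vector spaces over a nonarchimedean field with `U` having the subspace
topology and `W` the quotient topology.  Then the induced sequence of Hausdorff
completions `0 → Û → V̂ → Ŵ` is exact with strict morphisms: `Û → V̂` is injective and
an embedding (subspace topology), the image of `Û` equals the kernel of `V̂ → Ŵ`, and
`V̂ → Ŵ` is strict (i.e. the corestriction `V̂ → im(V̂ → Ŵ)` is a quotient map onto the
image with its subspace topology).
-/

open UniformSpace

open Filter Topology Set Uniformity

section Helpers

lemma exists_nhds_zero_sub {G : Type*} [AddGroup G] [TopologicalSpace G] [IsTopologicalAddGroup G]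
    {Ω : Set G} (hΩ : Ω ∈ 𝓝 (0 : G)) :
    ∃ Λ ∈ 𝓝 (0 : G), ∀ a ∈ Λ, ∀ b ∈ Λ, a - b ∈ Ω := by
  have h : Filter.Tendsto (fun p : G × G => p.1 - p.2) (𝓝 ((0 : G), (0 : G))) (𝓝 0) := by
    exact (continuous_fst.sub continuous_snd).tendsto' ((0 : G), (0 : G)) 0 (by simp)
  have hmem : (fun p : G × G => p.1 - p.2) ⁻¹' Ω ∈ 𝓝 ((0 : G), (0 : G)) := h hΩ
  rw [nhds_prod_eq, Filter.mem_prod_iff] at hmem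
  obtain ⟨Λ₁, h1, Λ₂, h2, hsub⟩ := hmem
  exact ⟨Λ₁ ∩ Λ₂, Filter.inter_mem h1 h2, fun a ha b hb =>
    hsub (Set.mk_mem_prod ha.1 hb.2)⟩

lemma isUniformInducing_of_isInducing_addHom {G H F : Type*} [AddGroup G] [AddGroup H]
    [UniformSpace G] [UniformSpace H] [IsUniformAddGroup G] [IsUniformAddGroup H]
    [FunLike F G H] [AddMonoidHomClass F G H]
    (f : F) (hf : Topology.IsInducing f) : IsUniformInducing f := by
  constructor
  rw [uniformity_eq_comap_nhds_zero G, uniformity_eq_comap_nhds_zero H, Filter.comap_comap]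
  have h0 : 𝓝 (0 : G) = Filter.comap f (𝓝 (0 : H)) := by
    simpa [map_zero] using hf.nhds_eq_comap (0 : G)
  rw [h0, Filter.comap_comap]
  congr 1
  ext p
  simp [Function.comp, map_sub]

lemma isUniformInducing_of_dense_comp {A B C : Type*} [UniformSpace A] [UniformSpace B]
    [UniformSpace C] {c : A → B} {j : A → C} {F : B → C}
    (hc : UniformContinuous c) (hcd : DenseRange c) (hj : IsUniformInducing j)
    (hF : UniformContinuous F) (hcomp : ∀ a, F (c a) = j a) :
    IsUniformInducing F := by
  constructor
  refine le_antisymm ?_ (Filter.map_le_iff_le_comap.1 hF)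
  intro E hE
  obtain ⟨E', ⟨hE'mem, hE'closed⟩, hE'sub⟩ := uniformity_hasBasis_closed.mem_iff.1 hE
  have hA : (fun p : A × A => (c p.1, c p.2)) ⁻¹' E' ∈ 𝓤 A := hc hE'mem
  rw [← hj.comap_uniformity, Filter.mem_comap] at hA
  obtain ⟨D, hD, hDsub⟩ := hA
  obtain ⟨D', ⟨hD'mem, hD'open⟩, hD'sub⟩ := uniformity_hasBasis_open.mem_iff.1 hD
  rw [Filter.mem_comap]
  refine ⟨D', hD'mem, ?_⟩
  have hOopen : IsOpen ((fun p : B × B => (F p.1, F p.2)) ⁻¹' D') :=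
    hD'open.preimage ((hF.continuous.comp continuous_fst).prodMk
      (hF.continuous.comp continuous_snd))
  have hdense : DenseRange (fun p : A × A => (c p.1, c p.2)) := by
    have := hcd.prodMap hcd
    convert this using 2 with p
    rfl
  have hsub : (fun p : B × B => (F p.1, F p.2)) ⁻¹' D' ∩
      Set.range (fun p : A × A => (c p.1, c p.2)) ⊆ E' := by
    rintro ⟨b1, b2⟩ ⟨hmem, ⟨a1, a2⟩, heq⟩
    have h1 : c a1 = b1 := congrArg Prod.fst heq
    have h2 : c a2 = b2 := congrArg Prod.snd heq
    subst h1; subst h2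
    have hin : ((a1, a2) : A × A) ∈ (fun p : A × A => (j p.1, j p.2)) ⁻¹' D := by
      have : (F (c a1), F (c a2)) ∈ D := hD'sub hmem
      simpa [hcomp] using this
    exact hDsub hin
  intro p hp
  apply hE'sub
  have hcl : p ∈ closure ((fun p : B × B => (F p.1, F p.2)) ⁻¹' D' ∩
      Set.range fun p : A × A => (c p.1, c p.2)) :=
    hdense.open_subset_closure_inter hOopen hp
  have := closure_mono hsub hcl
  rwa [hE'closed.closure_eq] at this

end Helpers

theorem statement8 {K U V W : Type*} [NontriviallyNormedField K] [IsUltrametricDist K]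
    [AddCommGroup U] [Module K U] [UniformSpace U] [IsUniformAddGroup U]
    [ContinuousSMul K U]
    [AddCommGroup V] [Module K V] [UniformSpace V] [IsUniformAddGroup V]
    [ContinuousSMul K V]
    [AddCommGroup W] [Module K W] [UniformSpace W] [IsUniformAddGroup W]
    [ContinuousSMul K W]
    (f : U →L[K] V) (g : V →L[K] W)
    (hfinj : Function.Injective f)
    (hgsurj : Function.Surjective g)
    (hexact : ∀ v : V, g v = 0 ↔ v ∈ Set.range f)
    (hfemb : Topology.IsEmbedding f)            -- `U` has the subspace topology
    (hgquot : Topology.IsQuotientMap g) :        -- `W` has the quotient topology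
    Function.Injective (Completion.map (f : U → V)) ∧
    Topology.IsEmbedding (Completion.map (f : U → V)) ∧
    (∀ y : Completion V,
      Completion.map (g : V → W) y = 0 ↔ y ∈ Set.range (Completion.map (f : U → V))) ∧
    Topology.IsQuotientMap (Set.rangeFactorization (Completion.map (g : V → W))) := by
  have hfu : UniformContinuous (f : U → V) :=
    uniformContinuous_addMonoidHom_of_continuous (f := f.toLinearMap.toAddMonoidHom) f.continuous
  have hgu : UniformContinuous (g : V → W) :=
    uniformContinuous_addMonoidHom_of_continuous (f := g.toLinearMap.toAddMonoidHom) g.continuous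
  set F : Completion U → Completion V := Completion.map (f : U → V) with hFdef
  set G : Completion V → Completion W := Completion.map (g : V → W) with hGdef
  have hFcoe : ∀ u : U, F ((u : Completion U)) = ((f u : V) : Completion V) :=
    fun u => Completion.map_coe hfu u
  have hGcoe : ∀ v : V, G ((v : Completion V)) = ((g v : W) : Completion W) :=
    fun v => Completion.map_coe hgu v
  have hFcont : Continuous F := Completion.continuous_map
  have hGcont : Continuous G := Completion.continuous_map
  -- `F` is uniformly inducing
  have hfui : IsUniformInducing (f : U → V) :=
    isUniformInducing_of_isInducing_addHom f hfemb.isInducing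
  have hFui : IsUniformInducing F := by
    refine isUniformInducing_of_dense_comp (c := ((↑) : U → Completion U))
      (j := fun u : U => ((f u : V) : Completion V))
      (Completion.uniformContinuous_coe U) (Completion.denseRange_coe)
      ((Completion.isUniformInducing_coe V).comp hfui) Completion.uniformContinuous_map hFcoe
  have hFinj : Function.Injective F := by
    intro x y hxy
    have : Inseparable x y := hFui.isInducing.inseparable_iff.1 (by rw [hxy])
    exact this.eq
  have hFemb : Topology.IsEmbedding F := ⟨hFui.isInducing, hFinj⟩
  -- additivity of `G`
  have hGadd : ∀ a b : Completion V, G (a + b) = G a + G b := by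
    intro a b
    refine Completion.induction_on₂ a b ?_ ?_
    · exact isClosed_eq (hGcont.comp continuous_add)
        ((hGcont.comp continuous_fst).add (hGcont.comp continuous_snd))
    · intro a b
      rw [← Completion.coe_add, hGcoe, hGcoe, hGcoe, map_add, Completion.coe_add]
  have hGneg : ∀ a : Completion V, G (-a) = - G a := by
    intro a
    refine Completion.induction_on a ?_ fun a => ?_
    · exact isClosed_eq (hGcont.comp continuous_neg) (hGcont.neg)
    · rw [← Completion.coe_neg, hGcoe, hGcoe, map_neg, Completion.coe_neg]
  have hGsub : ∀ a b : Completion V, G (a - b) = G a - G b := by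
    intro a b
    rw [sub_eq_add_neg, hGadd, hGneg, sub_eq_add_neg]
  -- `g` is an open map
  have hgopen : IsOpenMap (g : V → W) := by
    intro O hO
    rw [← hgquot.isOpen_preimage]
    have hset : (g : V → W) ⁻¹' ((g : V → W) '' O) =
        ⋃ n ∈ {v : V | g v = 0}, (fun v => v + n) '' O := by
      ext v
      simp only [Set.mem_preimage, Set.mem_image, Set.mem_iUnion, Set.mem_setOf_eq]
      constructor
      · rintro ⟨o, ho, hgo⟩
        exact ⟨v - o, by rw [map_sub, hgo, sub_self], o, ho, by abel⟩
      · rintro ⟨n, hn, o, ho, rfl⟩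
        exact ⟨o, ho, by rw [map_add, hn, add_zero]⟩
    rw [hset]
    exact isOpen_biUnion fun n _ => (Homeomorph.addRight n).isOpenMap O hO
  -- the key approximation lemma
  have key : ∀ y : Completion V, ∀ Θ₀ ∈ 𝓝 (0 : V),
      G y ∈ closure (((↑) : W → Completion W) '' ((g : V → W) '' Θ₀)) →
      ∀ Ω ∈ 𝓝 (0 : Completion V), ∃ t ∈ Θ₀, ∃ n : V, g n = 0 ∧
        y - (t : Completion V) - (n : Completion V) ∈ Ω := by
    intro y Θ₀ hΘ₀ hy Ω hΩ
    obtain ⟨Λ, hΛ, hΛΩ⟩ := exists_nhds_zero_sub hΩ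
    have hΛ₀ : ((↑) : V → Completion V) ⁻¹' Λ ∈ 𝓝 (0 : V) := by
      have := (Completion.continuous_coe V).tendsto 0
      rw [Completion.coe_zero] at this
      exact this hΛ
    set Λ₀ := ((↑) : V → Completion V) ⁻¹' Λ with hΛ₀def
    have hgΛ : (g : V → W) '' Λ₀ ∈ 𝓝 (0 : W) := by
      have := hgopen.image_mem_nhds hΛ₀
      rwa [map_zero] at this
    obtain ⟨M₁, hM₁, hM₁sub⟩ : ∃ M₁ ∈ 𝓝 ((0 : W) : Completion W),
        ((↑) : W → Completion W) ⁻¹' M₁ ⊆ (g : V → W) '' Λ₀ := by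
      have hind : 𝓝 (0 : W) = Filter.comap ((↑) : W → Completion W)
          (𝓝 ((0 : W) : Completion W)) :=
        (Completion.isUniformInducing_coe W).isInducing.nhds_eq_comap 0
      rw [hind, Filter.mem_comap] at hgΛ
      exact hgΛ
    rw [Completion.coe_zero] at hM₁
    obtain ⟨M, hM, hMsub⟩ := exists_nhds_zero_sub hM₁
    -- pick `t ∈ Θ₀` with `↑(g t) - G y ∈ M`
    have hnbhd : {w : Completion W | w - G y ∈ M} ∈ 𝓝 (G y) := by
      have h1 : Filter.Tendsto (fun w : Completion W => w - G y) (𝓝 (G y)) (𝓝 (G y - G y)) :=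
        tendsto_id.sub tendsto_const_nhds
      rw [sub_self] at h1
      exact h1 hM
    obtain ⟨w, hwS, hwI⟩ := mem_closure_iff_nhds.1 hy _ hnbhd
    obtain ⟨w', ⟨t, ht, rfl⟩, rfl⟩ := hwI
    -- pick `v` with `↑v - y ∈ Λ` and `G ↑v - G y ∈ M`
    have hne : Filter.NeBot (Filter.comap ((↑) : V → Completion V) (𝓝 y)) :=
      (Completion.isDenseInducing_coe (α := V)).comap_nhds_neBot y
    have hmem1 : ((↑) : V → Completion V) ⁻¹' {x : Completion V | x - y ∈ Λ} ∈
        Filter.comap ((↑) : V → Completion V) (𝓝 y) := by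
      apply Filter.preimage_mem_comap
      have h1 : Filter.Tendsto (fun x : Completion V => x - y) (𝓝 y) (𝓝 (y - y)) :=
        tendsto_id.sub tendsto_const_nhds
      rw [sub_self] at h1
      exact h1 hΛ
    have hmem2 : ((↑) : V → Completion V) ⁻¹' {x : Completion V | G x - G y ∈ M} ∈
        Filter.comap ((↑) : V → Completion V) (𝓝 y) := by
      apply Filter.preimage_mem_comap
      have h1 : Filter.Tendsto (fun x : Completion V => G x - G y) (𝓝 y) (𝓝 (G y - G y)) :=
        (hGcont.tendsto y).sub tendsto_const_nhds
      rw [sub_self] at h1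
      exact h1 hM
    haveI := hne
    obtain ⟨v, hv1, hv2⟩ := Filter.nonempty_of_mem (Filter.inter_mem hmem1 hmem2)
    -- hv1 : ↑v - y ∈ Λ, hv2 : G ↑v - G y ∈ M
    have hgv : ((g v : W) : Completion W) - ((g t : W) : Completion W) ∈ M₁ := by
      have h1 : ((g v : W) : Completion W) - G y ∈ M := by rw [← hGcoe]; exact hv2
      have h2 : ((g t : W) : Completion W) - G y ∈ M := hwS
      have := hMsub _ h1 _ h2
      simpa [sub_sub_sub_cancel_right] using this
    have hgvt : g v - g t ∈ (g : V → W) '' Λ₀ := by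
      apply hM₁sub
      rw [Set.mem_preimage, Completion.coe_sub]
      exact hgv
    obtain ⟨s, hsΛ₀, hs⟩ := hgvt
    refine ⟨t, ht, v - t - s, ?_, ?_⟩
    · rw [map_sub, map_sub, hs]; abel
    · have hrw : y - (t : Completion V) - ((v - t - s : V) : Completion V) =
          ((s : V) : Completion V) - ((v : Completion V) - y) := by
        rw [Completion.coe_sub, Completion.coe_sub]; abel
      rw [hrw]
      exact hΛΩ _ hsΛ₀ _ hv1
    -- the kernel set
  set N : Set V := {v : V | g v = 0} with hNdef
  have hNrange : N = Set.range (f : U → V) := Set.ext fun v => hexact v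
  -- Claim 1 : range F = closure (coe '' range f)
  have hfunext : (F ∘ ((↑) : U → Completion U)) = (((↑) : V → Completion V) ∘ (f : U → V)) :=
    funext hFcoe
  have hclaim1 : Set.range F = closure (((↑) : V → Completion V) '' Set.range (f : U → V)) := by
    apply subset_antisymm
    · rintro _ ⟨y, rfl⟩
      have hy : y ∈ closure (Set.range ((↑) : U → Completion U)) := by
        rw [Completion.denseRange_coe.closure_range]; trivial
      have h2 : F y ∈ F '' closure (Set.range ((↑) : U → Completion U)) := mem_image_of_mem F hy
      have h3 : F '' closure (Set.range ((↑) : U → Completion U)) ⊆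
          closure (F '' Set.range ((↑) : U → Completion U)) :=
        image_closure_subset_closure_image hFcont
      have h4 : F '' Set.range ((↑) : U → Completion U) =
          ((↑) : V → Completion V) '' Set.range (f : U → V) := by
        rw [← Set.range_comp, hfunext, Set.range_comp]
      rw [← h4]
      exact h3 h2
    · have hclosed : IsClosed (Set.range F) := hFui.isComplete_range.isClosed
      apply closure_minimal _ hclosed
      rintro _ ⟨v, ⟨u, rfl⟩, rfl⟩
      exact ⟨(u : Completion U), hFcoe u⟩
  -- Claim 2 : kernel of G = closure (coe '' N)
  have hker : {y : Completion V | G y = 0} = closure (((↑) : V → Completion V) '' N) := by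
    apply subset_antisymm
    · intro y hy
      rw [mem_closure_iff_nhds]
      intro S hS
      have hΩ : ⇑(Homeomorph.subLeft y) '' S ∈ 𝓝 (0 : Completion V) := by
        have h1 : ⇑(Homeomorph.subLeft y) '' S ∈ Filter.map (⇑(Homeomorph.subLeft y)) (𝓝 y) :=
          Filter.image_mem_map hS
        rw [(Homeomorph.subLeft y).map_nhds_eq y] at h1
        simpa using h1
      obtain ⟨Ω₁, hΩ₁, hΩ₁sum⟩ := exists_nhds_zero_half hΩ
      have hΘ₀ : ((↑) : V → Completion V) ⁻¹' Ω₁ ∈ 𝓝 (0 : V) := by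
        have h1 := (Completion.continuous_coe V).tendsto 0
        rw [Completion.coe_zero] at h1
        exact h1 hΩ₁
      have hy0 : G y ∈ closure (((↑) : W → Completion W) ''
          ((g : V → W) '' (((↑) : V → Completion V) ⁻¹' Ω₁))) := by
        rw [hy]
        apply subset_closure
        refine ⟨g 0, ⟨0, ?_, rfl⟩, by rw [map_zero, Completion.coe_zero]⟩
        show ((0 : V) : Completion V) ∈ Ω₁
        rw [Completion.coe_zero]
        exact mem_of_mem_nhds hΩ₁
      obtain ⟨t, ht, n, hn, hmem⟩ := key y _ hΘ₀ hy0 Ω₁ hΩ₁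
      have hyn : y - (n : Completion V) ∈ ⇑(Homeomorph.subLeft y) '' S := by
        have h2 : y - (n : Completion V) =
            (y - (t : Completion V) - (n : Completion V)) + (t : Completion V) := by abel
        rw [h2]
        exact hΩ₁sum _ hmem _ ht
      obtain ⟨s₀, hs₀S, hs₀eq⟩ := hyn
      have hs₀ : s₀ = (n : Completion V) := by
        have : y - s₀ = y - (n : Completion V) := hs₀eq
        exact sub_right_injective this
      refine ⟨s₀, hs₀S, ?_⟩
      rw [hs₀]
      exact ⟨n, hn, rfl⟩
    · apply closure_minimal
      · rintro _ ⟨v, hv, rfl⟩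
        show G ((v : Completion V)) = 0
        rw [hGcoe, hv, Completion.coe_zero]
      · exact isClosed_eq hGcont continuous_const
  -- exactness
  have hpart3 : ∀ y : Completion V, G y = 0 ↔ y ∈ Set.range F := by
    intro y
    constructor
    · intro hy
      have : y ∈ closure (((↑) : V → Completion V) '' N) := hker.subset hy
      rw [hNrange, ← hclaim1] at this
      exact this
    · intro hy
      have : y ∈ closure (((↑) : V → Completion V) '' N) := by
        rw [hNrange, ← hclaim1]; exact hy
      exact hker.superset this
  -- quotient map
  have hqcont : Continuous (Set.rangeFactorization G) := hGcont.subtype_mk _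
  have hqsurj : Function.Surjective (Set.rangeFactorization G) := Set.rangeFactorization_surjective
  have hqopen : IsOpenMap (Set.rangeFactorization G) := by
    intro O hO
    rw [isOpen_iff_forall_mem_open]
    rintro z ⟨x, hxO, rfl⟩
    have hΩ : {d : Completion V | x + d ∈ O} ∈ 𝓝 (0 : Completion V) := by
      have h1 : Filter.Tendsto (fun d : Completion V => x + d) (𝓝 0) (𝓝 (x + 0)) :=
        tendsto_const_nhds.add tendsto_id
      rw [add_zero] at h1
      exact h1 (hO.mem_nhds hxO)
    obtain ⟨Ω₁, hΩ₁, hΩ₁sum⟩ := exists_nhds_zero_half hΩ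
    obtain ⟨Ω₂, hΩ₂, hΩ₂sum⟩ := exists_nhds_zero_half hΩ₁
    have hΘ₀ : ((↑) : V → Completion V) ⁻¹' Ω₂ ∈ 𝓝 (0 : V) := by
      have h1 := (Completion.continuous_coe V).tendsto 0
      rw [Completion.coe_zero] at h1
      exact h1 hΩ₂
    set Θ₀ : Set V := ((↑) : V → Completion V) ⁻¹' Ω₂ with hΘdef
    have hclmem : closure (((↑) : W → Completion W) '' ((g : V → W) '' Θ₀)) ∈
        𝓝 (0 : Completion W) := by
      have h1 := (Completion.isDenseInducing_coe (α := W)).closure_image_mem_nhds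
        (hgopen.image_mem_nhds hΘ₀)
      rw [map_zero] at h1
      rwa [Completion.coe_zero] at h1
    set T : Set (Completion W) := (fun w => G x + w) ''
      interior (closure (((↑) : W → Completion W) '' ((g : V → W) '' Θ₀))) with hTdef
    have hTopen : IsOpen T := (Homeomorph.addLeft (G x)).isOpenMap _ isOpen_interior
    refine ⟨Subtype.val ⁻¹' T, ?_, hTopen.preimage continuous_subtype_val, ?_⟩
    · rintro w hw
      obtain ⟨y, hy⟩ := w.2
      obtain ⟨θ, hθ, hθeq⟩ := hw
      have hθ' : (w : Completion W) - G x = θ := by rw [← hθeq]; exact add_sub_cancel_left (G x) θ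
      have h1 : G (y - x) ∈ closure (((↑) : W → Completion W) '' ((g : V → W) '' Θ₀)) := by
        rw [hGsub, hy, hθ']
        exact interior_subset hθ
      obtain ⟨t, ht, n, hn, hmem⟩ := key (y - x) Θ₀ hΘ₀ h1 Ω₂ hΩ₂
      have hδ : y - x - (n : Completion V) ∈ Ω₁ := by
        have h2 : y - x - (n : Completion V) =
            (y - x - (t : Completion V) - (n : Completion V)) + (t : Completion V) := by abel
        rw [h2]
        exact hΩ₂sum _ hmem _ ht
      have hxδ : x + (y - x - (n : Completion V)) ∈ O := by
        have h0 : (0 : Completion V) ∈ Ω₁ := mem_of_mem_nhds hΩ₁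
        have h3 := hΩ₁sum _ hδ _ h0
        rw [add_zero] at h3
        exact h3
      refine ⟨x + (y - x - (n : Completion V)), hxδ, ?_⟩
      apply Subtype.ext
      show G (x + (y - x - (n : Completion V))) = (w : Completion W)
      rw [hGadd, hGsub, hGsub, hGcoe, hn, Completion.coe_zero, hy]
      abel
    · show (Set.rangeFactorization G x : Completion W) ∈ T
      refine ⟨0, mem_interior_iff_mem_nhds.2 hclmem, ?_⟩
      show G x + 0 = Set.rangeFactorization G x
      rw [add_zero]
      rfl
  exact ⟨hFinj, hFemb, hpart3, hqopen.isQuotientMap hqcont hqsurj⟩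
end

section
/- Let $\Lambda \subseteq V$ be an open lattice in a locally convex space $V$ over a nonarchimedean field, and let $0 \to U \to V \to W \to 0$ be exact with $U$ having subspace topology, $W$ quotient topology, and the image of $U$ dense in the kernel of $V \to W$. Then the sequence of quotients $0 \to U/(\Lambda \cap U) \to V/\Lambda \to W/\bar{\Lambda} \to 0$ is exact, where $\bar{\Lambda}$ is the image of $\Lambda$ in $W$. -/
/-!
STATEMENT 9: Let `Λ ⊆ V` be an open lattice in a locally convex space `V` over a
nonarchimedean field, and let `0 → U → V → W → 0` be exact with `U` having the
subspace topology, `W` the quotient topology, and the image of `U` dense in the kernel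
of `V → W`.  Then the induced sequence of quotients
`0 → U/(Λ ∩ U) → V/Λ → W/Λ̄ → 0` is exact, where `Λ̄` is the image of `Λ` in `W`.
-/

theorem statement9 {K U V W : Type*} [NontriviallyNormedField K] [IsUltrametricDist K]
    [AddCommGroup U] [Module K U] [TopologicalSpace U] [IsTopologicalAddGroup U]
    [ContinuousSMul K U]
    [AddCommGroup V] [Module K V] [TopologicalSpace V] [IsTopologicalAddGroup V]
    [ContinuousSMul K V]
    [AddCommGroup W] [Module K W] [TopologicalSpace W] [IsTopologicalAddGroup W]
    [ContinuousSMul K W]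
    (f : U →L[K] V) (g : V →L[K] W)
    (hfinj : Function.Injective f)
    (hgsurj : Function.Surjective g)
    (hexact : ∀ v : V, g v = 0 ↔ v ∈ Set.range f)
    (hfemb : Topology.IsEmbedding f)            -- `U` has the subspace topology
    (hgquot : Topology.IsQuotientMap g)          -- `W` has the quotient topology
    (hdense : (⇑g) ⁻¹' {0} ⊆ closure (Set.range (f : U → V)))
    (Λ : AddSubgroup V)
    (hΛopen : IsOpen (Λ : Set V))
    -- `Λ` is a lattice: an `𝒪_K`-submodule (stable under the unit ball of `K`) ...
    (hΛsmul : ∀ c : K, ‖c‖ ≤ 1 → ∀ v ∈ Λ, c • v ∈ Λ)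
    -- ... which generates `V` over `K` (is absorbing):
    (hΛabs : ∀ v : V, ∃ c : K, c ≠ 0 ∧ c • v ∈ Λ) :
    Function.Injective
      (QuotientAddGroup.map (Λ.comap f.toLinearMap.toAddMonoidHom) Λ
        f.toLinearMap.toAddMonoidHom (fun _ hu => hu)) ∧
    Function.Surjective
      (QuotientAddGroup.map Λ (Λ.map g.toLinearMap.toAddMonoidHom)
        g.toLinearMap.toAddMonoidHom (fun v hv => AddSubgroup.mem_map_of_mem _ hv)) ∧
    (∀ x : V ⧸ Λ,
      QuotientAddGroup.map Λ (Λ.map g.toLinearMap.toAddMonoidHom)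
          g.toLinearMap.toAddMonoidHom (fun v hv => AddSubgroup.mem_map_of_mem _ hv) x = 0 ↔
        x ∈ Set.range
          (QuotientAddGroup.map (Λ.comap f.toLinearMap.toAddMonoidHom) Λ
            f.toLinearMap.toAddMonoidHom (fun _ hu => hu))) := by
  have hg' : ∀ v : V, g.toLinearMap.toAddMonoidHom v = g v := fun _ => rfl
  have hf' : ∀ u : U, f.toLinearMap.toAddMonoidHom u = f u := fun _ => rfl
  refine ⟨?_, ?_, ?_⟩
  · -- injectivity
    intro x y h
    induction x using QuotientAddGroup.induction_on with | H a =>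
    induction y using QuotientAddGroup.induction_on with | H b =>
    rw [QuotientAddGroup.map_mk, QuotientAddGroup.map_mk, QuotientAddGroup.eq] at h
    rw [QuotientAddGroup.eq]
    simp only [AddSubgroup.mem_comap, map_add, map_neg, hf']
    simpa [hf'] using h
  · -- surjectivity
    intro y
    induction y using QuotientAddGroup.induction_on with | H w =>
    obtain ⟨v, hv⟩ := hgsurj w
    exact ⟨QuotientAddGroup.mk v, congrArg QuotientAddGroup.mk hv⟩
  · intro x
    induction x using QuotientAddGroup.induction_on with | H v =>
    change ((g.toLinearMap.toAddMonoidHom v : W) : W ⧸ Λ.map g.toLinearMap.toAddMonoidHom) = 0 ↔ _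
    constructor
    · intro h
      rw [QuotientAddGroup.eq_zero_iff] at h
      obtain ⟨l, hl, hgl⟩ := h
      have hker : g (v - l) = 0 := by
        rw [hg'] at hgl
        simp [map_sub, hgl]
      have hcl : v - l ∈ closure (Set.range (f : U → V)) := hdense (by simpa using hker)
      have hopen : IsOpen ((fun z => (v - l) + z) '' (Λ : Set V)) :=
        (Homeomorph.addLeft (v - l)).isOpenMap _ hΛopen
      have hmem : (v - l) ∈ (fun z => (v - l) + z) '' (Λ : Set V) :=
        ⟨0, Λ.zero_mem, by simp⟩
      obtain ⟨y, hy1, hy2⟩ := mem_closure_iff.mp hcl _ hopen hmem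
      obtain ⟨m, hm, hmy⟩ := hy1
      obtain ⟨u, hu⟩ := hy2
      refine ⟨QuotientAddGroup.mk u, ?_⟩
      rw [QuotientAddGroup.map_mk, QuotientAddGroup.eq]
      have hfu : f u = v - l + m := hu.trans hmy.symm
      rw [hf', hfu]
      have : -(v - l + m) + v = l - m := by abel
      rw [this]
      exact Λ.sub_mem hl hm
    · rintro ⟨y, hy⟩
      induction y using QuotientAddGroup.induction_on with | H u =>
      rw [QuotientAddGroup.map_mk, QuotientAddGroup.eq] at hy
      have hfu : g (f u) = 0 := (hexact (f u)).mpr ⟨u, rfl⟩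
      rw [QuotientAddGroup.eq_zero_iff, hg']
      have : g v = g (-(f u) + v) := by simp [map_add, map_neg, hfu]
      rw [this]
      rw [hf'] at hy
      exact AddSubgroup.mem_map_of_mem _ hy
end

section
/- Let $R$ be a (left and right) Noetherian ring, and let $A = \varprojlim_n A_n$ be a Fréchet–Stein algebra together with a compatible family of flat ring homomorphisms $R \to A_n$. Then $R \to A$ is flat. -/
/-!
STATEMENT 10: Let `R` be a Noetherian ring and `A = lim_n A_n` a Fréchet–Stein algebra
(a projective limit of Noetherian Banach algebras with flat, dense-image transition
maps) together with a compatible family of flat ring homomorphisms `R → A_n`.  Then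
the induced map `R → A` is flat.

We realize `A` as the subring of compatible families in `Π n, A_n`.
-/

set_option maxHeartbeats 1000000
set_option synthInstance.maxHeartbeats 200000
open Finset


open Finset

theorem isTrivialRelation_of_sum_smul_eq_zero' {R M : Type} [CommRing R] [AddCommGroup M]
    [Module R M] [Module.Flat R M] {ι : Type} [Fintype ι] {f : ι → R} {x : ι → M}
    (h : ∑ i, f i • x i = 0) :
    ∃ (κ : Type) (_ : Fintype κ) (a : ι → κ → R) (y : κ → M),
      (∀ i, x i = ∑ j, a i j • y j) ∧ ∀ j, ∑ i, f i * a i j = 0 := by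
  obtain ⟨k, a, y, h1, h2⟩ := Module.Flat.isTrivialRelation_of_sum_smul_eq_zero h
  exact ⟨Fin k, inferInstance, a, y, h1, h2⟩

theorem of_forall_isTrivialRelation' {R M : Type} [CommRing R] [AddCommGroup M] [Module R M]
    (hfx : ∀ {ι : Type} [Fintype ι] {f : ι → R} {x : ι → M}, ∑ i, f i • x i = 0 →
      ∃ (κ : Type) (_ : Fintype κ) (a : ι → κ → R) (y : κ → M),
        (∀ i, x i = ∑ j, a i j • y j) ∧ ∀ j, ∑ i, f i * a i j = 0) : Module.Flat R M :=
  Module.Flat.of_forall_isTrivialRelation fun {l f x} h => by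
    obtain ⟨κ, hκ, a, y, h1, h2⟩ := hfx h
    let e := Fintype.equivFin κ
    exact ⟨Fintype.card κ, fun i j => a i (e.symm j), fun j => y (e.symm j),
      fun i => by rw [h1 i]; exact (e.symm.sum_comp (fun j => a i j • y j)).symm,
      fun j => h2 _⟩

/-- Equational criterion for systems of equations: if `S` is flat over `R` and
`c : q → S` solves the homogeneous `R`-linear system with matrix `M`,
then `c` is an `S`-linear combination of `R`-solutions. -/
theorem lemA {R S : Type} [CommRing R] [CommRing S] [Algebra R S] [Module.Flat R S]
    (m : ℕ) :
    ∀ (q : Type) (_ : Fintype q) (M : Fin m → q → R) (c : q → S),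
      (∀ i, ∑ k, algebraMap R S (M i k) * c k = 0) →
      ∃ (s : Type) (_ : Fintype s) (a : s → q → R) (y : s → S),
        (∀ l i, ∑ k, M i k * a l k = 0) ∧ (∀ k, c k = ∑ l, y l * algebraMap R S (a l k)) := by
  classical
  induction m with
  | zero =>
    intro q hq M c _
    letI := hq
    refine ⟨q, ‹_›, fun l k => if l = k then 1 else 0, c, fun l i => i.elim0, fun k => ?_⟩
    simp [apply_ite (algebraMap R S), mul_ite, Finset.sum_ite_eq' Finset.univ k]
  | succ m ih =>
    intro q hq M c hc
    letI := hq
    -- apply the equational criterion for the last equation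
    have hlast : ∑ k, M (Fin.last m) k • c k = 0 := by
      simpa [Algebra.smul_def] using hc (Fin.last m)
    obtain ⟨κ, hκ, a, y, hxy, ha⟩ :=
      isTrivialRelation_of_sum_smul_eq_zero' (R := R) (M := S) (ι := q)
        (f := M (Fin.last m)) (x := c) hlast
    letI := hκ
    -- the new system for `y`
    set M' : Fin m → κ → R := fun i j => ∑ k, M i.castSucc k * a k j with hM'
    have hy : ∀ i, ∑ j, algebraMap R S (M' i j) * y j = 0 := by
      intro i
      have : ∑ j, algebraMap R S (M' i j) * y j
          = ∑ k, algebraMap R S (M i.castSucc k) * c k := by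
        simp only [hM', map_sum, Finset.sum_mul, hxy, Algebra.smul_def, Finset.mul_sum, map_mul]
        rw [Finset.sum_comm]
        exact Finset.sum_congr rfl fun j _ => Finset.sum_congr rfl fun k _ => by ring
      rw [this, hc]
    obtain ⟨s, hs, b, z, hb, hyz⟩ := ih κ hκ M' y hy
    refine ⟨s, hs, fun l k => ∑ j, a k j * b l j, z, fun l i => ?_, fun k => ?_⟩
    · refine Fin.lastCases ?_ (fun i => ?_) i
      · have : ∑ k, M (Fin.last m) k * ∑ j, a k j * b l j
            = ∑ j, (∑ k, M (Fin.last m) k * a k j) * b l j := by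
          simp only [Finset.mul_sum, Finset.sum_mul]
          rw [Finset.sum_comm]
          exact Finset.sum_congr rfl fun j _ => Finset.sum_congr rfl fun k _ => by ring
        rw [this]
        simp [ha]
      · have : ∑ k, M i.castSucc k * ∑ j, a k j * b l j = ∑ j, M' i j * b l j := by
          simp only [hM', Finset.mul_sum, Finset.sum_mul]
          rw [Finset.sum_comm]
          exact Finset.sum_congr rfl fun j _ => Finset.sum_congr rfl fun k _ => by ring
        rw [this, hb l i]
    · have h1 : c k = ∑ j, algebraMap R S (a k j) * y j := by
        simpa [Algebra.smul_def] using hxy k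
      rw [h1]
      simp only [hyz, map_sum, Finset.mul_sum, map_mul]
      rw [Finset.sum_comm]
      exact Finset.sum_congr rfl fun j _ => Finset.sum_congr rfl fun k' _ => by ring
open Finset

/-- over a Noetherian ring, the solution module of a finite homogeneous system
has a finite generating family. -/
theorem exists_gens {R : Type} [CommRing R] [IsNoetherianRing R]
    {m : ℕ} {q : Type} [Fintype q] (M : Fin m → q → R) :
    ∃ (p : Type) (_ : Fintype p) (u : p → q → R),
      (∀ l i, ∑ k, M i k * u l k = 0) ∧
      ∀ v : q → R, (∀ i, ∑ k, M i k * v k = 0) → v ∈ Submodule.span R (Set.range u) := by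
  classical
  set Φ : (q → R) →ₗ[R] (Fin m → R) := (Matrix.mulVecLin (R := R) (M : Matrix (Fin m) q R))
  have hΦ : ∀ v i, Φ v i = ∑ k, M i k * v k := by
    intro v i
    show Matrix.mulVec (M : Matrix (Fin m) q R) v i = _
    simp [Matrix.mulVec, dotProduct]
  obtain ⟨F, hF⟩ := IsNoetherian.noetherian (LinearMap.ker Φ)
  refine ⟨{ v // v ∈ F }, inferInstance, fun l => l.1, fun l i => ?_, fun v hv => ?_⟩
  · have : (l : q → R) ∈ LinearMap.ker Φ := by
      rw [← hF]; exact Submodule.subset_span l.2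
    have := LinearMap.mem_ker.mp this
    have := congrFun this i
    rw [hΦ] at this
    simpa using this
  · have hv' : v ∈ LinearMap.ker Φ := by
      rw [LinearMap.mem_ker]
      funext i
      rw [hΦ]; exact hv i
    rw [← hF] at hv'
    have : Set.range (fun l : { v // v ∈ F } => l.1) = (F : Set (q → R)) := Subtype.range_coe
    rwa [this]

/-- Kernel descent: any solution over flat `S` is an `S`-combination of the chosen
`R`-generators of the solution module. -/
theorem lemB {R S : Type} [CommRing R] [CommRing S] [Algebra R S] [Module.Flat R S]
    {m : ℕ} {q : Type} [Fintype q] {M : Fin m → q → R}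
    {p : Type} [Fintype p] {u : p → q → R}
    (hu : ∀ v : q → R, (∀ i, ∑ k, M i k * v k = 0) → v ∈ Submodule.span R (Set.range u))
    (c : q → S) (hc : ∀ i, ∑ k, algebraMap R S (M i k) * c k = 0) :
    ∃ e : p → S, ∀ k, c k = ∑ l, e l * algebraMap R S (u l k) := by
  classical
  obtain ⟨s, hs, a, y, ha, hcy⟩ := lemA m q ‹_› M c hc
  letI := hs
  have hrep : ∀ l : s, ∃ d : p → R, ∀ k, a l k = ∑ l', d l' * u l' k := by
    intro l
    have : a l ∈ Submodule.span R (Set.range u) := hu (a l) (fun i => ha l i)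
    obtain ⟨d, hd⟩ := (Submodule.mem_span_range_iff_exists_fun R).mp this
    exact ⟨d, fun k => by rw [← hd]; simp [Finset.sum_apply]⟩
  choose d hd using hrep
  refine ⟨fun l' => ∑ l, y l * algebraMap R S (d l l'), fun k => ?_⟩
  rw [hcy k]
  simp only [hd, map_sum, map_mul, Finset.mul_sum, Finset.sum_mul]
  rw [Finset.sum_comm]
  exact Finset.sum_congr rfl fun l' _ => Finset.sum_congr rfl fun l _ => by ring
variable {R : Type} [CommRing R] [IsNoetherianRing R]
variable {A : ℕ → Type} [∀ n, NormedCommRing (A n)] [∀ n, CompleteSpace (A n)]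
  [∀ n, IsNoetherianRing (A n)]

/-- The iterated transition map `A n →+ A m`, defined to be `0` when `m > n`. -/
def Tmap (t : ∀ n, A (n + 1) →+* A n) (m : ℕ) : (n : ℕ) → A n →+ A m
  | 0 => if h : m = 0 then (by subst h; exact AddMonoidHom.id (A 0)) else 0
  | (n + 1) =>
      if h : m = n + 1 then (by subst h; exact AddMonoidHom.id (A (n + 1)))
      else (Tmap t m n).comp (t n).toAddMonoidHom

theorem Tmap_self (t : ∀ n, A (n + 1) →+* A n) (n : ℕ) :
    Tmap t n n = AddMonoidHom.id (A n) := by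
  cases n with
  | zero => rw [Tmap, dif_pos rfl]
  | succ n => rw [Tmap, dif_pos rfl]

theorem Tmap_succ (t : ∀ n, A (n + 1) →+* A n) {m n : ℕ} (h : m ≤ n) :
    Tmap t m (n + 1) = (Tmap t m n).comp (t n).toAddMonoidHom := by
  rw [Tmap, dif_neg (by omega)]

theorem Tmap_cont (t : ∀ n, A (n + 1) →+* A n) (htcont : ∀ n, Continuous (t n)) (m : ℕ) :
    ∀ n, Continuous (Tmap t m n) := by
  intro n
  induction n with
  | zero =>
    by_cases h : m = 0
    · subst h; rw [Tmap_self]; exact continuous_id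
    · rw [Tmap, dif_neg h]
      show Continuous (fun _ => (0 : A m))
      exact continuous_const
  | succ n ih =>
    by_cases h : m = n + 1
    · subst h; rw [Tmap_self]; exact continuous_id
    · rw [Tmap, dif_neg h]
      exact ih.comp (htcont n)

theorem Tmap_left (t : ∀ n, A (n + 1) →+* A n) {n N : ℕ} (h : n + 1 ≤ N) (v : A N) :
    t n (Tmap t (n + 1) N v) = Tmap t n N v := by
  induction N with
  | zero => omega
  | succ N ih =>
    rcases Nat.lt_or_ge (n + 1) (N + 1) with h' | h'
    · rw [Tmap_succ t (by omega : n + 1 ≤ N), Tmap_succ t (by omega : n ≤ N)]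
      exact ih (by omega) (t N v)
    · have : n = N := by omega
      subst this
      rw [Tmap_self, Tmap_succ t (le_refl n), Tmap_self]
      rfl

theorem Tmap_compat (t : ∀ n, A (n + 1) →+* A n) {w : ∀ n, A n}
    (hw : ∀ n, t n (w (n + 1)) = w n) {n N : ℕ} (h : n ≤ N) :
    Tmap t n N (w N) = w n := by
  induction N with
  | zero =>
    have : n = 0 := by omega
    subst this; rw [Tmap_self]; rfl
  | succ N ih =>
    rcases Nat.lt_or_ge n (N + 1) with h' | h'
    · rw [Tmap_succ t (by omega : n ≤ N)]
      show Tmap t n N (t N (w (N + 1))) = w n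
      rw [hw N]; exact ih (by omega)
    · have : n = N + 1 := by omega
      subst this; rw [Tmap_self]; rfl

theorem Tmap_mul_f (t : ∀ n, A (n + 1) →+* A n) (f : ∀ n, R →+* A n)
    (hcomp : ∀ n r, t n (f (n + 1) r) = f n r) {n N : ℕ} (h : n ≤ N) (a : A N) (r : R) :
    Tmap t n N (a * f N r) = Tmap t n N a * f n r := by
  induction N with
  | zero =>
    have : n = 0 := by omega
    subst this; rw [Tmap_self]; rfl
  | succ N ih =>
    rcases Nat.lt_or_ge n (N + 1) with h' | h'
    · rw [Tmap_succ t (by omega : n ≤ N)]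
      show Tmap t n N (t N (a * f (N + 1) r)) = Tmap t n N (t N a) * f n r
      rw [map_mul, hcomp N]
      exact ih (by omega) (t N a)
    · have : n = N + 1 := by omega
      subst this; rw [Tmap_self]; rfl

/-- Smallness transfer: a `δ` that works for all `Tmap t m n`, `m ≤ n`, at once. -/
theorem Tmap_small (t : ∀ n, A (n + 1) →+* A n) (htcont : ∀ n, Continuous (t n))
    (n : ℕ) {ε : ℝ} (hε : 0 < ε) :
    ∃ δ > 0, ∀ m ≤ n, ∀ v : A n, ‖v‖ < δ → ‖Tmap t m n v‖ < ε := by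
  suffices h : ∀ B : ℕ, ∃ δ > 0, ∀ m < B, ∀ v : A n, ‖v‖ < δ → ‖Tmap t m n v‖ < ε by
    obtain ⟨δ, hδ, hδ'⟩ := h (n + 1)
    exact ⟨δ, hδ, fun m hm v hv => hδ' m (by omega) v hv⟩
  intro B
  induction B with
  | zero => exact ⟨1, one_pos, fun m hm => by omega⟩
  | succ B ih =>
    obtain ⟨δ₁, hδ₁, h₁⟩ := ih
    have hc : ContinuousAt (Tmap t B n) 0 := ((Tmap_cont t htcont B n).continuousAt)
    obtain ⟨δ₂, hδ₂, h₂⟩ := Metric.continuousAt_iff.mp hc ε hε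
    refine ⟨min δ₁ δ₂, lt_min hδ₁ hδ₂, fun m hm v hv => ?_⟩
    rcases Nat.lt_or_ge m B with h' | h'
    · exact h₁ m h' v (lt_of_lt_of_le hv (min_le_left _ _))
    · have : m = B := by omega
      subst this
      have h3 : dist v 0 < δ₂ := by
        simpa [dist_zero_right] using lt_of_lt_of_le hv (min_le_right _ _)
      have := h₂ h3
      simpa [dist_zero_right] using this
/-- The projective limit `lim_n A_n`, realized as the subring of compatible families. -/
def limitSubring (t : ∀ n, A (n + 1) →+* A n) : Subring (Π n, A n) where
  carrier := {x | ∀ n, t n (x (n + 1)) = x n}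
  mul_mem' := by intro a b ha hb; intro n; simp [map_mul, ha n, hb n]
  one_mem' := by intro n; simp
  add_mem' := by intro a b ha hb; intro n; simp [map_add, ha n, hb n]
  zero_mem' := by intro n; simp
  neg_mem' := by intro a ha n; simp [map_neg, ha n]

theorem statement10
    -- the Fréchet–Stein structure: transition maps, continuous with dense image and flat
    (t : ∀ n, A (n + 1) →+* A n)
    (htcont : ∀ n, Continuous (t n))
    (htdense : ∀ n, DenseRange (t n))
    (htflat : ∀ n, (t n).Flat)
    -- a compatible family of flat maps `R → A_n`
    (f : ∀ n, R →+* A n)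
    (hcomp : ∀ n r, t n (f (n + 1) r) = f n r)
    (hflat : ∀ n, (f n).Flat) :
    -- then the induced map `R → A = lim_n A_n` is flat
    ((Pi.ringHom f).codRestrict (limitSubring t) (fun r => fun n => hcomp n r)).Flat := by
  classical
  set g := (Pi.ringHom f).codRestrict (limitSubring t) (fun r => fun n => hcomp n r) with hg
  letI : Algebra R ↥(limitSubring t) := g.toAlgebra
  letI instA : ∀ n, Algebra R (A n) := fun n => (f n).toAlgebra
  haveI instF : ∀ n, Module.Flat R (A n) := fun n => hflat n
  have halg : ∀ n, algebraMap R (A n) = f n := fun n => rfl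
  show Module.Flat R ↥(limitSubring t)
  apply of_forall_isTrivialRelation'
  intro ι hι rr xx hrel
  letI := hι
  -- componentwise relations
  have hX : ∀ n, ∑ i, f n (rr i) * (xx i).1 n = 0 := by
    intro n
    have h0 : ((∑ i, rr i • xx i : ↥(limitSubring t)) : ∀ m, A m) n = 0 := by rw [hrel]; rfl
    rw [show ((∑ i, rr i • xx i : ↥(limitSubring t)) : ∀ m, A m)
        = ∑ i, ((rr i • xx i : ↥(limitSubring t)) : ∀ m, A m) from
      map_sum (limitSubring t).subtype _ _] at h0
    rw [Finset.sum_apply] at h0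
    rw [← h0]
    refine Finset.sum_congr rfl fun i _ => ?_
    rw [Algebra.smul_def, RingHom.algebraMap_toAlgebra]
    rfl
  -- first syzygies
  obtain ⟨p, hp, u, hu1, hu2⟩ := exists_gens (M := fun _ : Fin 1 => rr)
  letI := hp
  -- preimages at every level
  have hpre : ∀ n, ∃ c : p → A n, ∀ k, (xx k).1 n = ∑ l, c l * f n (u l k) := by
    intro n
    refine lemB (S := A n) (M := fun _ : Fin 1 => rr) (u := u) hu2 (fun k => (xx k).1 n) ?_
    intro i
    rw [halg n]
    exact hX n
  -- second syzygies
  set M2 : Fin (Fintype.card ι) → p → R := fun i' l => u l ((Fintype.equivFin ι).symm i') with hM2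
  obtain ⟨s, hs, e, he1, he2⟩ := exists_gens (M := M2)
  letI := hs
  have he1' : ∀ l (i : ι), ∑ j, e l j * u j i = 0 := by
    intro l i
    have h1 := he1 l (Fintype.equivFin ι i)
    simp only [hM2, Equiv.symm_apply_apply] at h1
    rw [← h1]
    exact Finset.sum_congr rfl fun j _ => mul_comm _ _
  -- kernel elements at each level are combinations of the `e`'s
  have hker : ∀ n (w : p → A n), (∀ i : ι, ∑ j, w j * f n (u j i) = 0) →
      ∃ z : s → A n, ∀ j, w j = ∑ l, z l * f n (e l j) := by
    intro n w hw
    refine lemB (S := A n) (M := M2) (u := e) he2 w ?_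
    intro i'
    rw [halg n]
    have h2 := hw ((Fintype.equivFin ι).symm i')
    rw [← h2]
    exact Finset.sum_congr rfl fun j _ => mul_comm _ _
  -- correction step: improve a level-`n` preimage to a level-`n+1` preimage moving little
  have hcorr : ∀ n (yn : p → A n), (∀ k, (xx k).1 n = ∑ l, yn l * f n (u l k)) →
      ∀ δ : ℝ, 0 < δ → ∃ y' : p → A (n + 1),
        (∀ k, (xx k).1 (n + 1) = ∑ l, y' l * f (n + 1) (u l k)) ∧
        ∀ j, ‖t n (y' j) - yn j‖ < δ := by
    intro n yn hyn δ hδ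
    obtain ⟨z, hz⟩ := hpre (n + 1)
    set w : p → A n := fun j => t n (z j) - yn j with hw
    have hwker : ∀ i : ι, ∑ j, w j * f n (u j i) = 0 := by
      intro i
      have h1 : ∑ j, t n (z j) * f n (u j i) = (xx i).1 n := by
        have h2 : ∑ j, t n (z j) * f n (u j i) = t n (∑ j, z j * f (n + 1) (u j i)) := by
          rw [map_sum]
          exact Finset.sum_congr rfl fun j _ => by rw [map_mul, hcomp n]
        rw [h2, ← hz i, (xx i).2 n]
      simp only [hw, sub_mul, Finset.sum_sub_distrib]
      rw [h1, ← hyn i, sub_eq_zero]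
    obtain ⟨zz, hzz⟩ := hker n w hwker
    set Cc : ℝ := ∑ j : p, ∑ l : s, ‖f n (e l j)‖ with hCc
    have hCc0 : 0 ≤ Cc := Finset.sum_nonneg fun j _ => Finset.sum_nonneg fun l _ => norm_nonneg _
    set δ'' : ℝ := δ / (1 + Cc) with hδ''def
    have hδ'' : 0 < δ'' := div_pos hδ (by linarith)
    have hzeta : ∀ l : s, ∃ ζ : A (n + 1), ‖t n ζ - zz l‖ < δ'' := by
      intro l
      obtain ⟨ζ, hζ⟩ := Metric.denseRange_iff.mp (htdense n) (zz l) δ'' hδ''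
      exact ⟨ζ, by rwa [← dist_eq_norm, dist_comm]⟩
    choose ζ hζ using hzeta
    refine ⟨fun j => z j - ∑ l, ζ l * f (n + 1) (e l j), fun k => ?_, fun j => ?_⟩
    · -- still a preimage
      have hterm : ∀ j, (∑ l, ζ l * f (n + 1) (e l j)) * f (n + 1) (u j k)
          = ∑ l, ζ l * f (n + 1) (e l j * u j k) := by
        intro j
        rw [Finset.sum_mul]
        exact Finset.sum_congr rfl fun l _ => by rw [mul_assoc, ← map_mul]
      have hcorr0 : ∑ j, (∑ l, ζ l * f (n + 1) (e l j)) * f (n + 1) (u j k) = 0 := by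
        rw [Finset.sum_congr rfl fun j _ => hterm j, Finset.sum_comm]
        refine Finset.sum_eq_zero fun l _ => ?_
        rw [← Finset.mul_sum, ← map_sum, he1' l k]
        simp
      simp only [sub_mul, Finset.sum_sub_distrib]
      rw [hcorr0, sub_zero]
      exact hz k
    · -- distance estimate
      have hkey : t n (z j - ∑ l, ζ l * f (n + 1) (e l j)) - yn j
          = ∑ l, (zz l - t n (ζ l)) * f n (e l j) := by
        have h1 : t n (∑ l, ζ l * f (n + 1) (e l j)) = ∑ l, t n (ζ l) * f n (e l j) := by
          rw [map_sum]
          exact Finset.sum_congr rfl fun l _ => by rw [map_mul, hcomp n]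
        rw [map_sub, h1, sub_right_comm]
        have h2 : t n (z j) - yn j = ∑ l, zz l * f n (e l j) := hzz j
        rw [h2, ← Finset.sum_sub_distrib]
        exact Finset.sum_congr rfl fun l _ => (sub_mul _ _ _).symm
      rw [hkey]
      calc ‖∑ l, (zz l - t n (ζ l)) * f n (e l j)‖
          ≤ ∑ l, ‖(zz l - t n (ζ l)) * f n (e l j)‖ := norm_sum_le _ _
        _ ≤ ∑ l, δ'' * ‖f n (e l j)‖ := by
            refine Finset.sum_le_sum fun l _ => ?_
            refine le_trans (norm_mul_le _ _) ?_
            refine mul_le_mul_of_nonneg_right ?_ (norm_nonneg _)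
            rw [norm_sub_rev]
            exact (hζ l).le
        _ = δ'' * ∑ l, ‖f n (e l j)‖ := by rw [Finset.mul_sum]
        _ ≤ δ'' * Cc := by
            refine mul_le_mul_of_nonneg_left ?_ hδ''.le
            exact Finset.single_le_sum (f := fun j => ∑ l, ‖f n (e l j)‖)
              (fun j _ => Finset.sum_nonneg fun l _ => norm_nonneg _) (Finset.mem_univ j)
        _ < δ'' * (1 + Cc) := by
            refine mul_lt_mul_of_pos_left ?_ hδ''
            linarith
        _ = δ := by
            rw [hδ''def]
            exact div_mul_cancel₀ δ (ne_of_gt (by linarith : (0:ℝ) < 1 + Cc))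
  -- the recursive tower of preimages
  choose δs hδs hδs' using fun n : ℕ => Tmap_small t htcont n (ε := (1/2 : ℝ)^n) (by positivity)
  choose nxt hnxt1 hnxt2 using fun n yn hyn => hcorr n yn hyn (δs n) (hδs n)
  obtain ⟨c0, hc0⟩ := hpre 0
  let Y : ∀ n, {c : p → A n // ∀ k, (xx k).1 n = ∑ l, c l * f n (u l k)} :=
    fun n => Nat.rec ⟨c0, hc0⟩ (fun n prev => ⟨nxt n prev.1 prev.2, hnxt1 n prev.1 prev.2⟩) n
  have hYb : ∀ n, ∀ m ≤ n, ∀ j, ‖Tmap t m n (t n ((Y (n+1)).1 j) - (Y n).1 j)‖ < (1/2:ℝ)^n :=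
    fun n m hm j => hδs' n m hm _ (hnxt2 n (Y n).1 (Y n).2 j)
  -- limits of the pushed-forward towers
  have hlimex : ∀ n (j : p), ∃ a : A n,
      Filter.Tendsto (fun k => Tmap t n (n + k) ((Y (n + k)).1 j)) Filter.atTop (nhds a) := by
    intro n j
    have hcau : CauchySeq (fun k => Tmap t n (n + k) ((Y (n + k)).1 j)) := by
      refine cauchySeq_of_le_geometric (1/2) ((1/2)^n) (by norm_num) (fun k => ?_)
      show dist (Tmap t n (n + k) ((Y (n + k)).1 j))
        (Tmap t n (n + k + 1) ((Y (n + k + 1)).1 j)) ≤ (1/2)^n * (1/2)^k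
      have h1 : Tmap t n (n + k + 1) ((Y (n + k + 1)).1 j)
          = Tmap t n (n + k) (t (n + k) ((Y (n + k + 1)).1 j)) := by
        rw [Tmap_succ t (Nat.le_add_right n k)]; rfl
      rw [dist_eq_norm', h1, ← map_sub]
      have h2 := hYb (n + k) n (Nat.le_add_right n k) j
      rw [pow_add] at h2
      exact h2.le
    exact cauchySeq_tendsto_of_complete hcau
  choose cl hcl using hlimex
  -- compatibility of the limits
  have hclcomp : ∀ n (j : p), t n (cl (n+1) j) = cl n j := by
    intro n j
    have h1 : Filter.Tendsto (fun k => t n (Tmap t (n+1) ((n+1) + k) ((Y ((n+1)+k)).1 j)))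
        Filter.atTop (nhds (t n (cl (n+1) j))) := ((htcont n).tendsto _).comp (hcl (n+1) j)
    have h2 : ∀ k, t n (Tmap t (n+1) ((n+1) + k) ((Y ((n+1)+k)).1 j))
        = Tmap t n (n + (k+1)) ((Y (n + (k+1))).1 j) := by
      intro k
      rw [Tmap_left t (Nat.le_add_right (n+1) k)]
      exact congrArg (fun N => Tmap t n N ((Y N).1 j)) (by omega)
    rw [show (fun k => t n (Tmap t (n+1) ((n+1) + k) ((Y ((n+1)+k)).1 j)))
        = fun k => Tmap t n (n + (k+1)) ((Y (n + (k+1))).1 j) from funext h2] at h1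
    have h3 : Filter.Tendsto (fun k => Tmap t n (n + (k+1)) ((Y (n + (k+1))).1 j))
        Filter.atTop (nhds (cl n j)) := (hcl n j).comp (Filter.tendsto_add_atTop_nat 1)
    exact tendsto_nhds_unique h1 h3
  -- the limit is still a preimage
  have hclpre : ∀ n (i : ι), (xx i).1 n = ∑ l, cl n l * f n (u l i) := by
    intro n i
    have hconst : ∀ k, ∑ l, Tmap t n (n+k) ((Y (n+k)).1 l) * f n (u l i) = (xx i).1 n := by
      intro k
      have h1 : ∀ l, Tmap t n (n+k) ((Y (n+k)).1 l) * f n (u l i)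
          = Tmap t n (n+k) ((Y (n+k)).1 l * f (n+k) (u l i)) :=
        fun l => (Tmap_mul_f t f hcomp (Nat.le_add_right n k) _ _).symm
      rw [Finset.sum_congr rfl (fun l _ => h1 l), ← map_sum, ← (Y (n+k)).2 i]
      exact Tmap_compat t (xx i).2 (Nat.le_add_right n k)
    have h2 : Filter.Tendsto (fun k => ∑ l, Tmap t n (n+k) ((Y (n+k)).1 l) * f n (u l i))
        Filter.atTop (nhds (∑ l, cl n l * f n (u l i))) := by
      refine tendsto_finset_sum _ (fun l _ => ?_)
      exact (hcl n l).mul tendsto_const_nhds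
    rw [show (fun k => ∑ l, Tmap t n (n+k) ((Y (n+k)).1 l) * f n (u l i))
        = fun _ => (xx i).1 n from funext hconst] at h2
    exact tendsto_nhds_unique tendsto_const_nhds h2
  -- assemble the trivialization of the relation
  refine ⟨p, hp, fun i l => u l i,
    fun l => ⟨fun n => cl n l, fun n => hclcomp n l⟩, fun i => ?_, fun l => ?_⟩
  · apply Subtype.ext
    have hsum : ((∑ l, u l i • (⟨fun n => cl n l, fun n => hclcomp n l⟩ : ↥(limitSubring t))
        : ↥(limitSubring t)) : ∀ m, A m)
        = ∑ l, ((u l i • (⟨fun n => cl n l, fun n => hclcomp n l⟩ : ↥(limitSubring t))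
        : ↥(limitSubring t)) : ∀ m, A m) := map_sum (limitSubring t).subtype _ _
    rw [hsum]
    funext n
    rw [Finset.sum_apply]
    have hterm : ∀ l, ((u l i • (⟨fun n => cl n l, fun n => hclcomp n l⟩ : ↥(limitSubring t))
        : ↥(limitSubring t)) : ∀ m, A m) n = f n (u l i) * cl n l := by
      intro l
      rw [Algebra.smul_def, RingHom.algebraMap_toAlgebra]
      rfl
    rw [Finset.sum_congr rfl fun l _ => hterm l]
    rw [hclpre n i]
    exact Finset.sum_congr rfl fun l _ => mul_comm _ _
  · simpa using hu1 l 0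
end

section
/- Let $U \to V$ be an injective continuous linear map of Hausdorff locally convex spaces over a nonarchimedean field such that the induced map $\hat{U} \to \hat{V}$ on Hausdorff completions is strict. Then $U$ carries the subspace topology induced from $V$, and $\hat{U} \to \hat{V}$ is injective. -/
/-!
STATEMENT 12: Let `f : U → V` be an injective continuous linear map of Hausdorff
(locally convex) topological vector spaces over a nonarchimedean field such that the
induced map `Û → V̂` on Hausdorff completions is strict (a topological isomorphism
onto its image with the subspace topology).  Then `U` carries the subspace topology
induced from `V` (i.e. `f` is an embedding) and `Û → V̂` is injective.
-/

open UniformSpace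

theorem statement12 {K U V : Type*} [NontriviallyNormedField K] [IsUltrametricDist K]
    [AddCommGroup U] [Module K U] [UniformSpace U] [IsUniformAddGroup U]
    [ContinuousSMul K U] [T2Space U]
    [AddCommGroup V] [Module K V] [UniformSpace V] [IsUniformAddGroup V]
    [ContinuousSMul K V] [T2Space V]
    (f : U →L[K] V)
    (hfinj : Function.Injective f)
    -- strictness of the induced map on Hausdorff completions: it is a topological
    -- isomorphism onto its image (with the subspace topology)
    (hstrict : Topology.IsQuotientMap (Set.rangeFactorization (Completion.map (f : U → V)))
      ∧ Topology.IsInducing (Set.rangeFactorization (Completion.map (f : U → V)))) :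
    Topology.IsEmbedding (f : U → V) ∧ Function.Injective (Completion.map (f : U → V)) := by
  obtain ⟨-, hind⟩ := hstrict
  -- range factorization is injective since Completion U is T0 and the map is inducing
  have hrinj : Function.Injective (Set.rangeFactorization (Completion.map (f : U → V))) :=
    hind.injective
  have hginj : Function.Injective (Completion.map (f : U → V)) := by
    intro x y h
    exact hrinj (Subtype.ext h)
  -- the full map Completion U → Completion V is inducing
  have hgind : Topology.IsInducing (Completion.map (f : U → V)) := by
    have : (Completion.map (f : U → V)) =
        (Subtype.val : Set.range (Completion.map (f : U → V)) → _) ∘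
        Set.rangeFactorization (Completion.map (f : U → V)) := rfl
    rw [this]
    exact Topology.IsInducing.subtypeVal.comp hind
  have huc : UniformContinuous (f : U → V) := f.uniformContinuous
  have hcomm : (Completion.map (f : U → V)) ∘ ((↑) : U → Completion U) =
      ((↑) : V → Completion V) ∘ (f : U → V) := by
    funext x
    simp [Completion.map_coe huc]
  have hcoeU : Topology.IsInducing ((↑) : U → Completion U) :=
    Completion.isUniformInducing_coe U |>.isInducing
  have hcompind : Topology.IsInducing (((↑) : V → Completion V) ∘ (f : U → V)) := by
    rw [← hcomm]
    exact hgind.comp hcoeU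
  have hfind : Topology.IsInducing (f : U → V) :=
    Topology.IsInducing.of_comp f.continuous (Completion.continuous_coe V) hcompind
  exact ⟨⟨hfind, hfinj⟩, hginj⟩
end
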